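/- arXiv:math/9910059 — 3 statements merged into one kernel-verified Lean document; each statement's English description precedes it below -/
import Mathlib

section
/- Let S be a nondegenerate alternating bilinear form on 𝔪 and let 𝔰𝔭(S) = {A ∈ End(𝔪) : S(Ax,y) + S(x,Ay) = 0 for all x,y ∈ 𝔪}. Then the kernel of the Spencer map δ restricted to Hom(𝔪, 𝔰𝔭(S)) is isomorphic to S³(𝔪*): explicitly, the linear map sending p ∈ Hom(𝔪,𝔰𝔭(S)) with δ(p) = 0 to the trilinear form (x,y,z) ↦ S(p(x)y, z) is a linear isomorphism from ker(δ) ∩ Hom(𝔪,𝔰𝔭(S)) onto the space of fully symmetric trilinear forms on 𝔪. -/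
/-!
Because `S` is alternating, `A ∈ 𝔰𝔭(S)` says exactly that `(y, z) ↦ S(Ay, z)` is symmetric, so
for symmetric `p` with values in `𝔰𝔭(S)` the form `S(p(x)y, z)` is symmetric in all three
variables. Conversely, nondegeneracy identifies `𝔪` with `𝔪*`, so every trilinear form `C` is
`S(p(x)y, z)` for a unique bilinear `p`, and full symmetry of `C` makes `p` symmetric with
values in `𝔰𝔭(S)`.
-/

noncomputable section

/-- The endomorphisms of `𝔪` infinitesimally preserving a bilinear form `S`,
i.e. the Lie algebra `𝔰𝔭(S)` when `S` is a nondegenerate alternating form. -/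
def spSet {m : Type*} [AddCommGroup m] [Module ℝ m]
    (S : m →ₗ[ℝ] m →ₗ[ℝ] ℝ) : Set (Module.End ℝ m) :=
  {A | ∀ x y, S (A x) y + S x (A y) = 0}

theorem LinearMap.SeparatingLeft.injective {R M N : Type*} [CommRing R]
    [AddCommGroup M] [Module R M] [AddCommGroup N] [Module R N]
    {B : M →ₗ[R] N →ₗ[R] R} (hB : B.SeparatingLeft) : Function.Injective B :=
  LinearMap.ker_eq_bot.mp (LinearMap.separatingLeft_iff_ker_eq_bot.mp hB)

theorem LinearMap.SeparatingLeft.existsUnique_lift {K V M N : Type*} [Field K]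
    [AddCommGroup V] [Module K V] [FiniteDimensional K V]
    [AddCommGroup M] [Module K M] [AddCommGroup N] [Module K N]
    {B : V →ₗ[K] V →ₗ[K] K} (hB : B.SeparatingLeft) (C : M →ₗ[K] N →ₗ[K] V →ₗ[K] K) :
    ∃! p : M →ₗ[K] N →ₗ[K] V, ∀ x y z, B (p x y) z = C x y z := by
  let e := B.linearEquivOfInjective hB.injective Subspace.dual_finrank_eq.symm
  have he : ∀ f z, B (e.symm f) z = f z := fun f z => by
    change e (e.symm f) z = f z
    rw [LinearEquiv.apply_symm_apply]
  refine ⟨C.compr₂ e.symm.toLinearMap, fun x y z => he _ z, fun q hq => ?_⟩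
  ext x y
  exact hB.injective (LinearMap.ext fun z => (hq x y z).trans (he _ z).symm)

theorem mem_spSet_iff_of_isAlt {m : Type*} [AddCommGroup m] [Module ℝ m]
    {S : m →ₗ[ℝ] m →ₗ[ℝ] ℝ} (hS : S.IsAlt) {A : Module.End ℝ m} :
    A ∈ spSet S ↔ ∀ x y, S (A x) y = S (A y) x := by
  refine forall₂_congr fun x y => ?_
  rw [← hS.neg (A y) x, ← sub_eq_add_neg, sub_eq_zero]

/-- For a nondegenerate alternating bilinear form `S` on `𝔪`,
the map sending `p ∈ ker(δ) ∩ Hom(𝔪, 𝔰𝔭(S))` to the trilinear form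
`(x,y,z) ↦ S(p(x)y, z)` is a linear isomorphism onto the space of fully symmetric
trilinear forms on `𝔪` (so `ker δ ≅ S³(𝔪*)`): it takes values in the symmetric
forms, and every fully symmetric trilinear form has a unique preimage. -/
theorem spencer_kernel_sp_iso_sym3
    {m : Type*} [AddCommGroup m] [Module ℝ m] [FiniteDimensional ℝ m]
    (S : m →ₗ[ℝ] m →ₗ[ℝ] ℝ)
    (halt : ∀ x, S x x = 0)
    (hnondeg : ∀ x, (∀ y, S x y = 0) → x = 0) :
    (∀ p : m →ₗ[ℝ] Module.End ℝ m,
      (∀ x, p x ∈ spSet S) → (∀ x y, p x y = p y x) →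
      (∀ x y z, S (p x y) z = S (p y x) z ∧ S (p x y) z = S (p x z) y)) ∧
    (∀ C : m →ₗ[ℝ] m →ₗ[ℝ] m →ₗ[ℝ] ℝ,
      (∀ x y z, C x y z = C y x z) → (∀ x y z, C x y z = C x z y) →
      ∃! p : m →ₗ[ℝ] Module.End ℝ m,
        (∀ x, p x ∈ spSet S) ∧ (∀ x y, p x y = p y x) ∧
        (∀ x y z, S (p x y) z = C x y z)) := by
  have hsp : ∀ A, A ∈ spSet S ↔ ∀ x y, S (A x) y = S (A y) x :=
    fun _ => mem_spSet_iff_of_isAlt halt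
  refine ⟨fun p hp hsymm x y z => ⟨by rw [hsymm], (hsp _).1 (hp x) y z⟩,
    fun C hC₁₂ hC₂₃ => ?_⟩
  obtain ⟨p, hpC, hp_unique⟩ := LinearMap.SeparatingLeft.existsUnique_lift hnondeg C
  refine ⟨p, ⟨fun x => (hsp _).2 fun y z => ?_,
    fun x y => LinearMap.SeparatingLeft.injective hnondeg (LinearMap.ext fun z => ?_), hpC⟩,
    fun q hq => hp_unique q hq.2.2⟩
  · rw [hpC, hpC, hC₂₃]
  · rw [hpC, hpC, hC₁₂]

end
end

section
/- Let S be a nondegenerate alternating bilinear form on 𝔪 and let 𝔰𝔭(S) = {A ∈ End(𝔪) : S(Ax,y) + S(x,Ay) = 0 for all x,y ∈ 𝔪}. Define τ from the space of 𝔪-valued alternating bilinear maps on 𝔪 to trilinear forms on 𝔪 by τ(T)(x,y,z) = S(T(x,y),z) + S(T(y,z),x) + S(T(z,x),y). Then τ(T) is an alternating trilinear form for every T, the map τ is surjective onto Λ³(𝔪*), and the kernel of τ equals the image of the Spencer map δ restricted to Hom(𝔪, 𝔰𝔭(S)); consequently coker(δ|_{Hom(𝔪,𝔰𝔭(S))})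 ≅ Λ³(𝔪*). -/
noncomputable section

/-- For a nondegenerate alternating bilinear form `S` on `𝔪`,
define `τ(T)(x,y,z) = S(T(x,y),z) + S(T(y,z),x) + S(T(z,x),y)` for `𝔪`-valued
alternating bilinear maps `T`.  Then `τ(T)` is alternating, `τ` is surjective onto
the alternating trilinear forms, and `ker τ` is exactly the image of the Spencer
map `δ` restricted to `Hom(𝔪, 𝔰𝔭(S))`; consequently `coker(δ) ≅ Λ³(𝔪*)`. -/
theorem tau_alternating_surjective_kernel_eq_spencer_image
    {m : Type*} [AddCommGroup m] [Module ℝ m] [FiniteDimensional ℝ m]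
    (S : m →ₗ[ℝ] m →ₗ[ℝ] ℝ)
    (halt : ∀ x, S x x = 0)
    (hnondeg : ∀ x, (∀ y, S x y = 0) → x = 0) :
    -- (a) `τ(T)` is an alternating trilinear form for every alternating `T`
    (∀ T : m →ₗ[ℝ] m →ₗ[ℝ] m, (∀ x, T x x = 0) →
      (∀ x z, S (T x x) z + S (T x z) x + S (T z x) x = 0) ∧
      (∀ x y, S (T x y) y + S (T y y) x + S (T y x) y = 0)) ∧
    -- (b) `τ` is surjective onto `Λ³(𝔪*)`
    (∀ φ : m →ₗ[ℝ] m →ₗ[ℝ] m →ₗ[ℝ] ℝ,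
      (∀ x z, φ x x z = 0) → (∀ x y, φ x y y = 0) →
      ∃ T : m →ₗ[ℝ] m →ₗ[ℝ] m, (∀ x, T x x = 0) ∧
        ∀ x y z, S (T x y) z + S (T y z) x + S (T z x) y = φ x y z) ∧
    -- (c) `ker τ = image of δ restricted to Hom(𝔪, 𝔰𝔭(S))`
    (∀ T : m →ₗ[ℝ] m →ₗ[ℝ] m, (∀ x, T x x = 0) →
      ((∀ x y z, S (T x y) z + S (T y z) x + S (T z x) y = 0) ↔
        ∃ p : m →ₗ[ℝ] Module.End ℝ m,
          (∀ x, p x ∈ spSet S) ∧ ∀ x y, T x y = p x y - p y x)) := by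
  -- S is skew-symmetric
  have hskew : ∀ x y, S x y = -S y x := by
    intro x y
    have h := halt (x + y)
    simp only [map_add, LinearMap.add_apply, halt] at h
    linarith
  -- S is nondegenerate in Mathlib's sense
  have hnd : LinearMap.BilinForm.Nondegenerate S :=
    ⟨hnondeg, fun y h => hnondeg y fun x => by rw [hskew, h x, neg_zero]⟩
  set e : m ≃ₗ[ℝ] Module.Dual ℝ m := LinearMap.BilinForm.toDual S hnd with he
  have hsymm : ∀ (f : Module.Dual ℝ m) (v : m), S (e.symm f) v = f v := fun f v =>
    LinearMap.BilinForm.apply_toDual_symm_apply (hB := hnd) f v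
  refine ⟨?_, ?_, ?_⟩
  · -- (a)
    intro T hT
    have hTskew : ∀ x y, T x y = -T y x := by
      intro x y
      have h' : T x y + T y x = 0 := by
        have h := hT (x + y)
        simp only [map_add, LinearMap.add_apply, hT, zero_add, add_zero] at h
        first | exact h | (rw [add_comm]; exact h)
      exact eq_neg_of_add_eq_zero_left h'
    constructor
    · intro x z
      have h1 : S (T x x) z = 0 := by rw [hT x]; simp
      have h2 : T z x = -T x z := hTskew z x
      rw [h1, h2, map_neg]
      simp
    · intro x y
      have h1 : S (T y y) x = 0 := by rw [hT y]; simp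
      have h2 : T y x = -T x y := hTskew y x
      rw [h1, h2, map_neg]
      simp
  · -- (b)
    intro φ h12 h23
    have hφ12 : ∀ x y z, φ x y z = -φ y x z := by
      intro x y z
      have h := h12 (x + y) z
      simp only [map_add, LinearMap.add_apply, h12] at h
      linarith
    have hφ23 : ∀ x y z, φ x y z = -φ x z y := by
      intro x y z
      have h := h23 x (y + z)
      simp only [map_add, LinearMap.add_apply, h23] at h
      linarith
    refine ⟨(((3:ℝ)⁻¹) • φ).compr₂ e.symm.toLinearMap, ?_, ?_⟩
    · intro x
      have : φ x x = 0 := by ext z; exact h12 x z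
      simp [LinearMap.compr₂_apply, this]
    · intro x y z
      have key : ∀ a b c, S (((((3:ℝ)⁻¹) • φ).compr₂ e.symm.toLinearMap) a b) c
          = (3:ℝ)⁻¹ * φ a b c := by
        intro a b c
        simp only [LinearMap.compr₂_apply, LinearEquiv.coe_coe, hsymm, LinearMap.smul_apply,
          smul_eq_mul]
      rw [key, key, key]
      have c2 : φ z x y = φ x y z := by rw [hφ12 z x y, hφ23 x z y]; ring
      have c1 : φ y z x = φ x y z := by rw [hφ12 y z x, hφ23 z y x, neg_neg]; exact c2
      rw [c1, c2]; ring
  · -- (c)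
    intro T hT
    have hTskew : ∀ x y, T y x = -T x y := by
      intro x y
      have h' : T x y + T y x = 0 := by
        have h := hT (x + y)
        simp only [map_add, LinearMap.add_apply, hT, zero_add, add_zero] at h
        first | exact h | (rw [add_comm]; exact h)
      exact eq_neg_of_add_eq_zero_right h'
    constructor
    · -- kernel ⊆ image of δ
      intro hτ
      set τ₁ : m →ₗ[ℝ] m →ₗ[ℝ] Module.Dual ℝ m := T.compr₂ S with hτ₁
      set B : m →ₗ[ℝ] m →ₗ[ℝ] Module.Dual ℝ m :=
        ((3:ℝ)⁻¹) • (τ₁ + LinearMap.lflip.toLinearMap ∘ₗ τ₁) with hB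
      set q : m →ₗ[ℝ] m →ₗ[ℝ] m := B.compr₂ e.symm.toLinearMap with hq
      have hp : ∀ x y z, S (q x y) z
          = (3:ℝ)⁻¹ * (S (T x y) z + S (T x z) y) := by
        intro x y z
        simp only [hq, LinearMap.compr₂_apply, LinearEquiv.coe_coe, hsymm, hB,
          LinearMap.smul_apply, LinearMap.add_apply, LinearMap.comp_apply,
          LinearMap.lflip_apply, LinearMap.flip_apply, hτ₁, smul_eq_mul]
      refine ⟨q, ?_, ?_⟩
      · intro x y z
        have h1 := hp x y z
        have h2 := hp x z y
        have h3 := hskew y (q x z)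
        linarith
      · intro x y
        apply sub_eq_zero.mp
        apply hnondeg
        intro z
        have h1 := hp x y z
        have h2 := hp y x z
        have hc := hτ x y z
        have hs1 : S (T z x) y = -S (T x z) y := by rw [hTskew x z, map_neg]; simp
        have hs2 : S (T y x) z = -S (T x y) z := by rw [hTskew x y, map_neg]; simp
        have hs3 : S (T y z) x = -S (T x y) z + S (T x z) y := by
          rw [hs1] at hc; linarith
        simp only [map_sub, LinearMap.sub_apply]
        rw [hs2] at h2
        linarith
    · -- image of δ ⊆ kernel
      rintro ⟨p, hsp, hδ⟩ x y z
      have e1 := hsp x y z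
      have e2 := hsp y z x
      have e3 := hsp z x y
      have k1 := hskew y (p x z)
      have k2 := hskew z (p y x)
      have k3 := hskew x (p z y)
      rw [hδ x y, hδ y z, hδ z x]
      simp only [map_sub, LinearMap.sub_apply]
      linarith

end
end

section
/- For the real Lie subalgebra 𝔥₀ = { it·Id + A : t ∈ ℝ, A ∈ 𝔰𝔩(2,ℝ) } of End_ℝ(ℂ²) (the Lie algebra of H = S¹·SL(2,ℝ) ⊂ GL(2,ℂ)), the space K(𝔥₀) has real dimension 9 (as an 𝔰𝔩(2,ℝ)-module it is isomorphic to V₄ ⊕ V₂ ⊕ V₀). -/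
set_option synthInstance.maxHeartbeats 1000000
set_option maxHeartbeats 4000000

open scoped Matrix

noncomputable section

/-- A 2×2 complex matrix, regarded as a real-linear endomorphism of `ℂ²`. -/
def toEndR : Matrix (Fin 2) (Fin 2) ℂ →ₗ[ℝ] Module.End ℝ (Fin 2 → ℂ) where
  toFun M :=
    { toFun := M.mulVec
      map_add' := fun x y => Matrix.mulVec_add M x y
      map_smul' := fun c x => M.mulVec_smul c x }
  map_add' M N := LinearMap.ext fun v => Matrix.add_mulVec M N v
  map_smul' c M := LinearMap.ext fun v => Matrix.smul_mulVec c M v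

lemma smul_fact (c t : ℝ) :
    ((((c * t : ℝ)) : ℂ) * Complex.I) • (1 : Matrix (Fin 2) (Fin 2) ℂ)
      = c • ((((t : ℝ) : ℂ) * Complex.I) • (1 : Matrix (Fin 2) (Fin 2) ℂ)) := by
  have h : (((c * t : ℝ)) : ℂ) * Complex.I = c • (((t : ℝ) : ℂ) * Complex.I) := by
    rw [Complex.real_smul]
    push_cast
    ring
  rw [h, smul_assoc]

lemma map_ofReal_smul (c : ℝ) (A : Matrix (Fin 2) (Fin 2) ℝ) :
    (c • A).map (Complex.ofReal) = c • (A.map (Complex.ofReal)) := by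
  ext i j
  simp [Matrix.map_apply, Complex.real_smul]

/-- The Lie algebra `𝔥₀` of `S¹ · SL(2,ℝ)` acting on `ℂ²`:
all endomorphisms of the form `i t · Id + A` with `t ∈ ℝ` and `A ∈ 𝔰𝔩(2,ℝ)`. -/
def h0 : Submodule ℝ (Module.End ℝ (Fin 2 → ℂ)) where
  carrier := {E | ∃ (t : ℝ) (A : Matrix (Fin 2) (Fin 2) ℝ), A.trace = 0 ∧
    E = toEndR (((t : ℂ) * Complex.I) • (1 : Matrix (Fin 2) (Fin 2) ℂ)
        + A.map (Complex.ofReal))}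
  zero_mem' := by
    refine ⟨0, 0, by simp, ?_⟩
    have h1 : (((0 : ℝ) : ℂ) * Complex.I) • (1 : Matrix (Fin 2) (Fin 2) ℂ)
        + (0 : Matrix (Fin 2) (Fin 2) ℝ).map (Complex.ofReal) = 0 := by
      have : (0 : Matrix (Fin 2) (Fin 2) ℝ).map (Complex.ofReal) = 0 := by
        ext i j; simp
      rw [this]
      simp
    rw [h1, map_zero]
  add_mem' := by
    rintro E F ⟨t, A, hA, rfl⟩ ⟨s, B, hB, rfl⟩
    refine ⟨t + s, A + B, by simp [Matrix.trace_add, hA, hB], ?_⟩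
    have hmap : (A + B).map (Complex.ofReal)
        = A.map (Complex.ofReal) + B.map (Complex.ofReal) := by
      ext i j; simp
    have hM : ((((t + s : ℝ)) : ℂ) * Complex.I) • (1 : Matrix (Fin 2) (Fin 2) ℂ)
        + (A + B).map (Complex.ofReal)
        = (((((t : ℝ)) : ℂ) * Complex.I) • (1 : Matrix (Fin 2) (Fin 2) ℂ)
            + A.map (Complex.ofReal))
          + (((((s : ℝ)) : ℂ) * Complex.I) • (1 : Matrix (Fin 2) (Fin 2) ℂ)
            + B.map (Complex.ofReal)) := by
      rw [hmap]
      push_cast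
      rw [add_mul, add_smul]
      abel
    rw [hM]
    exact (map_add toEndR _ _).symm
  smul_mem' := by
    rintro c E ⟨t, A, hA, rfl⟩
    refine ⟨c * t, c • A, by simp [Matrix.trace_smul, hA], ?_⟩
    rw [smul_fact, map_ofReal_smul, ← smul_add]
    exact (map_smul toEndR c _).symm


variable {m : Type*} [AddCommGroup m] [Module ℝ m]
/-- The curvature space `K(𝔥)`: alternating bilinear maps `R : 𝔪 × 𝔪 → 𝔥`
satisfying the first Bianchi identity. -/
def Kspace (h : Submodule ℝ (Module.End ℝ m)) :
    Submodule ℝ (m →ₗ[ℝ] m →ₗ[ℝ] Module.End ℝ m) where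
  carrier := {R | (∀ x, R x x = 0) ∧ (∀ x y, R x y ∈ h) ∧
    ∀ x y z, R x y z + R y z x + R z x y = 0}
  zero_mem' := ⟨fun _ => by simp, fun _ _ => h.zero_mem, fun _ _ _ => by simp⟩
  add_mem' := by
    rintro R S ⟨hR1, hR2, hR3⟩ ⟨hS1, hS2, hS3⟩
    refine ⟨fun x => ?_, fun x y => ?_, fun x y z => ?_⟩
    · simp [hR1 x, hS1 x]
    · simpa using h.add_mem (hR2 x y) (hS2 x y)
    · have h3 : (R x y z + R y z x + R z x y) + (S x y z + S y z x + S z x y) = 0 := by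
        rw [hR3 x y z, hS3 x y z, add_zero]
      simp only [LinearMap.add_apply]
      rw [← h3]; abel
  smul_mem' := by
    rintro c R ⟨hR1, hR2, hR3⟩
    refine ⟨fun x => ?_, fun x y => ?_, fun x y z => ?_⟩
    · simp [hR1 x]
    · simpa using h.smul_mem c (hR2 x y)
    · have h3 := hR3 x y z
      simp only [LinearMap.smul_apply]
      rw [← smul_add, ← smul_add, h3, smul_zero]


noncomputable instance instKspaceAddCommGroup {m : Type*} [AddCommGroup m] [Module ℝ m]
    (h : Submodule ℝ (Module.End ℝ m)) :
    AddCommGroup ↥(Kspace h) :=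
  @Submodule.addCommGroup ℝ _ _ LinearMap.addCommGroup _ (Kspace h)


/-!
An alternating `R : 𝔪 × 𝔪 → 𝔥₀` is determined by its six values `R(eᵢ, eⱼ)`, `i < j`, on a real
basis of `ℂ²`, i.e. by 24 real coordinates, and by trilinearity and alternation the first Bianchi
identity only has to hold on the four increasing basis triples. These 16 linear equations have
rank 15: every solution vanishes once nine suitable coordinates do, and each value of those nine
is attained by an explicit tensor, so `K(𝔥₀) ≅ ℝ⁹`.
-/

namespace LinearMap

variable {ι R M N : Type*} [CommRing R] [AddCommGroup M] [Module R M] [AddCommGroup N]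
  [Module R N]

theorem IsAlt.ext_basis [LinearOrder ι] (b : Module.Basis ι R M) {B C : M →ₗ[R] M →ₗ[R] N}
    (hB : B.IsAlt) (hC : C.IsAlt) (h : ∀ i j, i < j → B (b i) (b j) = C (b i) (b j)) :
    B = C := by
  refine LinearMap.ext_basis b b fun i j => ?_
  rcases lt_trichotomy i j with hij | rfl | hji
  · exact h i j hij
  · rw [hB, hC]
  · rw [← hB.neg, ← hC.neg, h j i hji]

theorem apply_mem_of_basis (b : Module.Basis ι R M) {B : M →ₗ[R] M →ₗ[R] N} {p : Submodule R N}
    (h : ∀ i j, B (b i) (b j) ∈ p) (x y : M) : B x y ∈ p := by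
  have hB : B.compr₂ p.mkQ = 0 :=
    ext_basis b b fun i j => by simpa using h i j
  simpa using congr($hB x y)

theorem isAlt_of_basis_antisymm {K : Type*} [Field K] [NeZero (2 : K)] [Module K M] [Module K N]
    (b : Module.Basis ι K M) {B : M →ₗ[K] M →ₗ[K] N}
    (h : ∀ i j, B (b j) (b i) = -B (b i) (b j)) : B.IsAlt := by
  have hsymm : B + B.flip = 0 :=
    ext_basis b b fun i j => by
      rw [add_apply, add_apply, flip_apply, h i j, add_neg_cancel, zero_apply, zero_apply]
  intro x
  have h2 : (2 : K) • B x x = 0 := by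
    rw [two_smul]
    simpa using congr($hsymm x x)
  exact (smul_eq_zero.mp h2).resolve_left two_ne_zero

def cyclicSum (B : M →ₗ[R] M →ₗ[R] Module.End R M) (x y z : M) : M :=
  B x y z + B y z x + B z x y

variable {B : M →ₗ[R] M →ₗ[R] Module.End R M}

theorem cyclicSum_cycle (x y z : M) : cyclicSum B y z x = cyclicSum B x y z := by
  simp only [cyclicSum]
  abel

theorem IsAlt.cyclicSum_swap (hB : B.IsAlt) (x y z : M) :
    cyclicSum B y x z = -cyclicSum B x y z := by
  simp only [cyclicSum, ← hB.neg x y, ← hB.neg y z, ← hB.neg z x, LinearMap.neg_apply]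
  abel

theorem IsAlt.cyclicSum_self (hB : B.IsAlt) (x z : M) : cyclicSum B x x z = 0 := by
  simp only [cyclicSum, hB x, ← hB.neg x z, LinearMap.neg_apply, LinearMap.zero_apply]
  abel

theorem cyclicSum_eq_zero_of_basis_left (b : Module.Basis ι R M) {y z : M}
    (h : ∀ i, cyclicSum B (b i) y z = 0) (x : M) : cyclicSum B x y z = 0 := by
  have hlin : (B.flip y).flip z + B y z + (B z).flip y = 0 := b.ext h
  exact congr($hlin x)

theorem IsAlt.cyclicSum_eq_zero_of_basis [LinearOrder ι] (b : Module.Basis ι R M) (hB : B.IsAlt)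
    (h : ∀ i j k, i < j → j < k → cyclicSum B (b i) (b j) (b k) = 0) (x y z : M) :
    cyclicSum B x y z = 0 := by
  have sorted : ∀ i j k, i ≤ j → j ≤ k → cyclicSum B (b i) (b j) (b k) = 0 := by
    intro i j k hij hjk
    rcases hij.lt_or_eq with hij | rfl
    · rcases hjk.lt_or_eq with hjk | rfl
      · exact h i j k hij hjk
      · rw [← cyclicSum_cycle, hB.cyclicSum_self]
    · exact hB.cyclicSum_self _ _
  have all : ∀ i j k, cyclicSum B (b i) (b j) (b k) = 0 := by
    intro i j k
    have e₁ := cyclicSum_cycle (B := B) (b i) (b j) (b k)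
    have e₂ := cyclicSum_cycle (B := B) (b k) (b i) (b j)
    have e₃ := hB.cyclicSum_swap (b i) (b j) (b k)
    have e₄ := hB.cyclicSum_swap (b k) (b i) (b j)
    have e₅ := hB.cyclicSum_swap (b j) (b k) (b i)
    rcases le_total i j with hij | hji <;> rcases le_total j k with hjk | hkj <;>
      rcases le_total i k with hik | hki <;>
      first
      | exact sorted i j k ‹_› ‹_›
      | rw [← e₁]; exact sorted j k i ‹_› ‹_›
      | rw [e₂]; exact sorted k i j ‹_› ‹_›
      | rw [← neg_eq_zero, ← e₃]; exact sorted j i k ‹_› ‹_›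
      | rw [← neg_eq_zero, e₂, ← e₄]; exact sorted i k j ‹_› ‹_›
      | rw [← neg_eq_zero, ← e₁, ← e₅]; exact sorted k j i ‹_› ‹_›
  -- Cycling moves each argument in turn into the first slot, where `B` is linear.
  have h₁ : ∀ x j k, cyclicSum B x (b j) (b k) = 0 :=
    fun x j k => cyclicSum_eq_zero_of_basis_left b (fun i => all i j k) x
  have h₂ : ∀ x y k, cyclicSum B y x (b k) = 0 := fun x y k =>
    cyclicSum_eq_zero_of_basis_left b (fun i => (cyclicSum_cycle _ _ _).symm.trans (h₁ x k i)) y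
  exact cyclicSum_eq_zero_of_basis_left b
    (fun i => (cyclicSum_cycle _ _ _).symm.trans (h₂ z y i)) x

end LinearMap

namespace KspaceH0

open Complex LinearMap

def realCoords : (Fin 2 → ℂ) ≃ₗ[ℝ] (Fin 4 → ℝ) where
  toFun z := ![(z 0).re, (z 1).re, (z 0).im, (z 1).im]
  invFun v := ![⟨v 0, v 2⟩, ⟨v 1, v 3⟩]
  map_add' z w := by ext k; fin_cases k <;> simp
  map_smul' c z := by ext k; fin_cases k <;> simp
  left_inv z := by ext k; fin_cases k <;> simp
  right_inv v := by ext k; fin_cases k <;> simp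

def realBasis : Module.Basis (Fin 4) ℝ (Fin 2 → ℂ) := .ofEquivFun realCoords

lemma realBasis_zero : realBasis 0 = ![1, 0] := by
  ext k; fin_cases k <;> simp [realBasis, realCoords, Complex.ext_iff]

lemma realBasis_one : realBasis 1 = ![0, 1] := by
  ext k; fin_cases k <;> simp [realBasis, realCoords, Complex.ext_iff]

lemma realBasis_two : realBasis 2 = ![I, 0] := by
  ext k; fin_cases k <;> simp [realBasis, realCoords, Complex.ext_iff]

lemma realBasis_three : realBasis 3 = ![0, I] := by
  ext k; fin_cases k <;> simp [realBasis, realCoords, Complex.ext_iff]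

def h0Matrix (t α β γ : ℝ) : Matrix (Fin 2) (Fin 2) ℂ :=
  !![α + t * I, β; γ, -α + t * I]

lemma mem_h0_iff {E : Module.End ℝ (Fin 2 → ℂ)} :
    E ∈ h0 ↔ ∃ t α β γ : ℝ, E = toEndR (h0Matrix t α β γ) := by
  constructor
  · rintro ⟨t, A, hA, rfl⟩
    refine ⟨t, A 0 0, A 0 1, A 1 0, congrArg toEndR ?_⟩
    have hA11 : A 1 1 = -A 0 0 := by
      rw [Matrix.trace_fin_two] at hA; linarith
    ext i j; fin_cases i <;> fin_cases j <;> simp [h0Matrix, hA11] <;> ring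
  · rintro ⟨t, α, β, γ, rfl⟩
    refine ⟨t, !![α, β; γ, -α], by simp [Matrix.trace_fin_two], congrArg toEndR ?_⟩
    ext i j; fin_cases i <;> fin_cases j <;> simp [h0Matrix] <;> ring

lemma toEndR_apply (M : Matrix (Fin 2) (Fin 2) ℂ) (v : Fin 2 → ℂ) : toEndR M v = M *ᵥ v := rfl

@[simp] lemma toEndR_h0Matrix_mem (t α β γ : ℝ) : toEndR (h0Matrix t α β γ) ∈ h0 :=
  mem_h0_iff.2 ⟨t, α, β, γ, rfl⟩

@[simp] lemma h0Matrix_zero : h0Matrix 0 0 0 0 = 0 := by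
  ext i j; fin_cases i <;> fin_cases j <;> simp [h0Matrix]

lemma toEndR_h0Matrix_apply (t α β γ : ℝ) (z w : ℂ) :
    toEndR (h0Matrix t α β γ) ![z, w] = ![(α + t * I) * z + β * w, γ * z + (-α + t * I) * w] := by
  ext k; fin_cases k <;> simp [toEndR_apply, h0Matrix] <;> ring

variable (t α β γ : ℝ)

@[simp] lemma toEndR_h0Matrix_realBasis_zero :
    toEndR (h0Matrix t α β γ) (realBasis 0) = ![α + t * I, γ] := by
  simp [realBasis_zero, toEndR_h0Matrix_apply]

@[simp] lemma toEndR_h0Matrix_realBasis_one :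
    toEndR (h0Matrix t α β γ) (realBasis 1) = ![(β : ℂ), -α + t * I] := by
  simp [realBasis_one, toEndR_h0Matrix_apply]

@[simp] lemma toEndR_h0Matrix_realBasis_two :
    toEndR (h0Matrix t α β γ) (realBasis 2) = ![-t + α * I, γ * I] := by
  rw [realBasis_two, toEndR_h0Matrix_apply]
  ext k; fin_cases k
  · simp; linear_combination (t : ℂ) * I_sq
  · simp

@[simp] lemma toEndR_h0Matrix_realBasis_three :
    toEndR (h0Matrix t α β γ) (realBasis 3) = ![β * I, -t - α * I] := by
  rw [realBasis_three, toEndR_h0Matrix_apply]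
  ext k; fin_cases k
  · simp
  · simp; linear_combination (t : ℂ) * I_sq

/- The general solution of the first Bianchi identity on the four increasing triples of
`realBasis`, for the coordinates of the six values `R (eᵢ) (eⱼ) ∈ 𝔥₀`, `i < j`. -/
def curvTable (q : Fin 9 → ℝ) : Matrix (Fin 4) (Fin 4) (Module.End ℝ (Fin 2 → ℂ)) :=
  let A := toEndR (h0Matrix (q 0) (q 1) (q 2) (q 3))
  let B := toEndR (h0Matrix (-q 1) (q 0 - q 6) (q 4) (q 8))
  let C := toEndR (h0Matrix (q 3) (-q 8) (-q 6) (q 7))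
  let D := toEndR (h0Matrix (-q 2) (q 4) (q 5) (q 6))
  !![0, A, C, B; -A, 0, B, D; -C, -B, 0, A; -B, -D, -A, 0]

def curv (q : Fin 9 → ℝ) :
    (Fin 2 → ℂ) →ₗ[ℝ] (Fin 2 → ℂ) →ₗ[ℝ] Module.End ℝ (Fin 2 → ℂ) :=
  realBasis.constr ℝ fun i => realBasis.constr ℝ (curvTable q i)

@[simp] lemma curv_realBasis (q : Fin 9 → ℝ) (i j : Fin 4) :
    curv q (realBasis i) (realBasis j) = curvTable q i j := by
  simp [curv]

lemma curv_isAlt (q : Fin 9 → ℝ) : (curv q).IsAlt :=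
  isAlt_of_basis_antisymm realBasis fun i j => by
    rw [curv_realBasis, curv_realBasis]
    fin_cases i <;> fin_cases j <;> simp [curvTable]

lemma curv_mem_h0 (q : Fin 9 → ℝ) (x y : Fin 2 → ℂ) : curv q x y ∈ h0 :=
  apply_mem_of_basis realBasis (fun i j => by
    rw [curv_realBasis]
    fin_cases i <;> fin_cases j <;> simp [curvTable]) x y

lemma curv_cyclicSum (q : Fin 9 → ℝ) (x y z : Fin 2 → ℂ) : cyclicSum (curv q) x y z = 0 := by
  refine (curv_isAlt q).cyclicSum_eq_zero_of_basis realBasis (fun i j k hij hjk => ?_) x y z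
  simp only [cyclicSum, curv_realBasis]
  fin_cases i <;> fin_cases j <;> fin_cases k <;> simp at hij hjk <;>
    simp [curvTable, Complex.ext_iff, sub_eq_add_neg, add_assoc]

lemma curv_mem_Kspace (q : Fin 9 → ℝ) : curv q ∈ Kspace h0 :=
  ⟨curv_isAlt q, curv_mem_h0 q, curv_cyclicSum q⟩

/- Reads off the free coordinates of `curvTable`, using
`toEndR (h0Matrix t α β γ) e₀ = (α + t i, γ)` and `toEndR (h0Matrix t α β γ) e₁ = (β, -α + t i)`. -/
def curvatureParams :
    ((Fin 2 → ℂ) →ₗ[ℝ] (Fin 2 → ℂ) →ₗ[ℝ] Module.End ℝ (Fin 2 → ℂ)) →ₗ[ℝ] (Fin 9 → ℝ) where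
  toFun R :=
    let e := realBasis
    ![(R (e 2) (e 3) (e 0) 0).im, (R (e 2) (e 3) (e 0) 0).re, (R (e 2) (e 3) (e 1) 0).re,
      (R (e 2) (e 3) (e 0) 1).re, (R (e 1) (e 3) (e 0) 0).re, (R (e 1) (e 3) (e 1) 0).re,
      (R (e 1) (e 3) (e 0) 1).re, (R (e 0) (e 2) (e 0) 1).re, (R (e 1) (e 2) (e 0) 1).re]
  map_add' R S := by ext k; fin_cases k <;> simp
  map_smul' c R := by ext k; fin_cases k <;> simp

lemma curvatureParams_curv (q : Fin 9 → ℝ) : curvatureParams (curv q) = q := by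
  ext k; fin_cases k <;> simp [curvatureParams, curvTable]

lemma eq_zero_of_curvatureParams_eq_zero
    {R : (Fin 2 → ℂ) →ₗ[ℝ] (Fin 2 → ℂ) →ₗ[ℝ] Module.End ℝ (Fin 2 → ℂ)}
    (hR : R ∈ Kspace h0) (hq : curvatureParams R = 0) : R = 0 := by
  obtain ⟨hAlt, hmem, hBianchi⟩ := hR
  replace hAlt : R.IsAlt := hAlt
  choose t α β γ hE using fun i j => mem_h0_iff.1 (hmem (realBasis i) (realBasis j))
  have b₀₁₂ := hBianchi (realBasis 0) (realBasis 1) (realBasis 2)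
  have b₀₁₃ := hBianchi (realBasis 0) (realBasis 1) (realBasis 3)
  have b₀₂₃ := hBianchi (realBasis 0) (realBasis 2) (realBasis 3)
  have b₁₂₃ := hBianchi (realBasis 1) (realBasis 2) (realBasis 3)
  rw [← hAlt.neg (realBasis 0) (realBasis 2)] at b₀₁₂
  rw [← hAlt.neg (realBasis 0) (realBasis 3)] at b₀₁₃ b₀₂₃
  rw [← hAlt.neg (realBasis 1) (realBasis 3)] at b₁₂₃
  simp only [hE, LinearMap.neg_apply] at b₀₁₂ b₀₁₃ b₀₂₃ b₁₂₃
  simp [Complex.ext_iff] at b₀₁₂ b₀₁₃ b₀₂₃ b₁₂₃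
  obtain ⟨⟨_, _⟩, _, _⟩ := b₀₁₂
  obtain ⟨⟨_, _⟩, _, _⟩ := b₀₁₃
  obtain ⟨⟨_, _⟩, _, _⟩ := b₀₂₃
  obtain ⟨⟨_, _⟩, _, _⟩ := b₁₂₃
  have hq' := congrFun hq
  simp [Fin.forall_fin_succ, curvatureParams, hE] at hq'
  obtain ⟨_, _, _, _, _, _, _, _, _⟩ := hq'
  have hzero : ∀ i j, i < j → t i j = 0 ∧ α i j = 0 ∧ β i j = 0 ∧ γ i j = 0 := by
    intro i j hij
    fin_cases i <;> fin_cases j <;> simp at hij ⊢ <;> refine ⟨?_, ?_, ?_, ?_⟩ <;> linarith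
  refine hAlt.ext_basis realBasis (fun _ => rfl) fun i j hij => ?_
  obtain ⟨h₁, h₂, h₃, h₄⟩ := hzero i j hij
  rw [hE, h₁, h₂, h₃, h₄, h0Matrix_zero, map_zero]
  rfl

end KspaceH0

/-- For the Lie algebra `𝔥₀` of `S¹·SL(2,ℝ) ⊂ GL(2,ℂ)`,
the curvature space `K(𝔥₀)` has real dimension `9`. -/
theorem finrank_Kspace_h0 : Module.finrank ℝ ↥(Kspace h0) = 9 := by
  open KspaceH0 in
  let Ψ := curvatureParams ∘ₗ (Kspace h0).subtype
  have hinj : Function.Injective Ψ := (injective_iff_map_eq_zero Ψ).2 fun R hR =>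
    Subtype.ext (eq_zero_of_curvatureParams_eq_zero R.2 hR)
  have hsurj : Function.Surjective Ψ := fun q =>
    ⟨⟨curv q, curv_mem_Kspace q⟩, curvatureParams_curv q⟩
  rw [(LinearEquiv.ofBijective Ψ ⟨hinj, hsurj⟩).finrank_eq, Module.finrank_fin_fun]

end
end
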